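/- Let φ : (0,∞) → (0,∞) be a decreasing convex function, let K, L ∈ 𝒦ⁿ, and let i be an integer with 0 ≤ i < n. Then (1/(n A_i(K))) ∫_{S^{n−1}} φ(b(L,u)/b(K,u)) b(K,u)^{n−i} dS(u) ≥ φ((A_i(L)/A_i(K))^{1/(n−i)}). If φ is strictly convex, equality holds if and only if K and L have similar width. -/

import Mathlib

open MeasureTheory Metric Filter Set
open scoped RealInnerProductSpace ENNReal
open scoped NNReal Pointwise

noncomputable section

abbrev Euc (n : ℕ) := EuclideanSpace ℝ (Fin n)

/-- Support function `h(K,x) = sup {⟨x,y⟩ : y ∈ K}`. -/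
def suppFn {n : ℕ} (K : Set (Euc n)) (x : Euc n) : ℝ :=
  sSup ((fun y => ⟪x, y⟫) '' K)

/-- Half width of `K` in direction `u`: `b(K,u) = (h(K,u)+h(K,-u))/2`. -/
def halfWidth {n : ℕ} (K : Set (Euc n)) (u : Euc n) : ℝ :=
  (suppFn K u + suppFn K (-u)) / 2

/-- A convex body containing the origin in its interior. -/
def IsConvexBody {n : ℕ} (K : Set (Euc n)) : Prop :=
  IsCompact K ∧ Convex ℝ K ∧ (0 : Euc n) ∈ interior K

/-- Spherical Lebesgue measure on the unit sphere. -/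
def sphMeasure (n : ℕ) : Measure (sphere (0 : Euc n) 1) :=
  (volume : Measure (Euc n)).toSphere

/-- Width integral `A_i(K) = (1/n) ∫_{S^{n-1}} b(K,u)^{n-i} dS(u)`. -/
def widthIntegral (n i : ℕ) (K : Set (Euc n)) : ℝ :=
  (1 / (n : ℝ)) * ∫ u : sphere (0 : Euc n) 1,
    halfWidth K (u : Euc n) ^ ((n : ℝ) - i) ∂(sphMeasure n)

/-- `K` and `L` have similar width: `b(L,·) = λ b(K,·)` on the sphere for some `λ > 0`. -/
def SimilarWidth {n : ℕ} (K L : Set (Euc n)) : Prop :=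
  ∃ lam : ℝ, 0 < lam ∧ ∀ u : Euc n, ‖u‖ = 1 → halfWidth L u = lam * halfWidth K u

/-- The class `Φ`: convex, strictly decreasing `φ : (0,∞) → (0,∞)` with
`φ(0⁺)=∞`, `φ(∞)=0`, `φ(1)=1`. -/
structure IsOrliczPhi (φ : ℝ → ℝ) : Prop where
  convexOn : ConvexOn ℝ (Set.Ioi (0 : ℝ)) φ
  strictAntiOn : StrictAntiOn φ (Set.Ioi (0 : ℝ))
  pos : ∀ t : ℝ, 0 < t → 0 < φ t
  tendsto_zero : Filter.Tendsto φ (nhdsWithin 0 (Set.Ioi 0)) Filter.atTop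
  tendsto_atTop : Filter.Tendsto φ Filter.atTop (nhds 0)
  one : φ 1 = 1


section SuppFn
variable {n : ℕ} {K : Set (Euc n)}

lemma bddAbove_inner_image (hK : IsCompact K) (x : Euc n) :
    BddAbove ((fun y => ⟪x, y⟫) '' K) :=
  (hK.image (continuous_const.inner continuous_id)).bddAbove

lemma inner_le_suppFn (hK : IsCompact K) {y : Euc n} (hy : y ∈ K) (x : Euc n) :
    ⟪x, y⟫ ≤ suppFn K x :=
  le_csSup (bddAbove_inner_image hK x) ⟨y, hy, rfl⟩

lemma lipschitz_suppFn (hK : IsCompact K) (hne : K.Nonempty) {R : ℝ} (hR0 : 0 ≤ R)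
    (hR : ∀ y ∈ K, ‖y‖ ≤ R) : LipschitzWith (Real.toNNReal R) (suppFn K) := by
  apply LipschitzWith.of_dist_le_mul
  intro x z
  have key : ∀ a b : Euc n, suppFn K a ≤ suppFn K b + R * ‖a - b‖ := by
    intro a b
    refine csSup_le (hne.image _) ?_
    rintro t ⟨y, hy, rfl⟩
    have h1 : ⟪a, y⟫ = ⟪b, y⟫ + ⟪a - b, y⟫ := by rw [inner_sub_left]; ring
    have h2 : ⟪a - b, y⟫ ≤ ‖a - b‖ * ‖y‖ := real_inner_le_norm _ _
    have h3 : ‖a - b‖ * ‖y‖ ≤ ‖a - b‖ * R := by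
      exact mul_le_mul_of_nonneg_left (hR y hy) (norm_nonneg _)
    have h4 := inner_le_suppFn hK hy b
    nlinarith
  rw [Real.dist_eq, Real.coe_toNNReal _ hR0, dist_eq_norm]
  rw [abs_sub_le_iff]
  constructor
  · have := key x z; nlinarith
  · have := key z x; rw [norm_sub_rev] at this; nlinarith

lemma continuous_halfWidth (hK : IsCompact K) (hne : K.Nonempty) :
    Continuous (halfWidth K) := by
  obtain ⟨R, hR0, hR⟩ : ∃ R, 0 ≤ R ∧ ∀ y ∈ K, ‖y‖ ≤ R := by
    obtain ⟨R, hR⟩ := hK.isBounded.exists_norm_le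
    exact ⟨max R 0, le_max_right _ _, fun y hy => (hR y hy).trans (le_max_left _ _)⟩
  have h := (lipschitz_suppFn hK hne hR0 hR).continuous
  exact ((h.add (h.comp continuous_neg)).div_const 2)

lemma halfWidth_pos (hK : IsConvexBody K) {u : Euc n} (hu : ‖u‖ = 1) :
    0 < halfWidth K u := by
  obtain ⟨hKc, -, h0⟩ := hK
  obtain ⟨ε, hε, hball⟩ := Metric.mem_nhds_iff.1 (mem_interior_iff_mem_nhds.1 h0)
  have key : ∀ v : Euc n, ‖v‖ = 1 → ε / 2 ≤ suppFn K v := by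
    intro v hv
    have hmem : (ε / 2) • v ∈ K := by
      apply hball
      simp only [mem_ball_iff_norm, sub_zero, norm_smul, hv, mul_one, Real.norm_eq_abs,
        abs_of_pos (half_pos hε)]
      exact half_lt_self hε
    have := inner_le_suppFn hKc hmem v
    rw [real_inner_smul_right, real_inner_self_eq_norm_sq, hv] at this
    linarith
  have h1 := key u hu
  have h2 := key (-u) (by rwa [norm_neg])
  unfold halfWidth; linarith

end SuppFn

lemma sphMeasure_openPos {n : ℕ} (hn : 0 < n) :
    (sphMeasure n).IsOpenPosMeasure := by
  constructor
  intro s hs hne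
  have hms : MeasurableSet s := hs.measurableSet
  rw [sphMeasure, Measure.toSphere_apply' _ hms]
  have hd : Module.finrank ℝ (Euc n) = n := finrank_euclideanSpace_fin
  refine mul_ne_zero (by simp [hd, hn.ne']) ?_
  -- the set `Ioo 0 1 • (coe '' s)` equals the image of an open set
  have haux := (volume : Measure (Euc n)).toSphere_apply_aux s ⟨1, mem_Ioi.2 one_pos⟩
  rw [← haux]
  set T : Set (Euc n) :=
    Subtype.val '' ((homeomorphUnitSphereProd (Euc n)) ⁻¹' s ×ˢ Iio ⟨1, mem_Ioi.2 one_pos⟩)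
  have hIio : IsOpen (Iio (⟨1, mem_Ioi.2 one_pos⟩ : Ioi (0:ℝ))) := by
    have : (Iio (⟨1, mem_Ioi.2 one_pos⟩ : Ioi (0:ℝ))) = Subtype.val ⁻¹' (Iio (1:ℝ)) := by
      ext x; simp [Set.mem_Iio, ← Subtype.coe_lt_coe]
    rw [this]
    exact isOpen_Iio.preimage continuous_subtype_val
  have hTopen : IsOpen T := by
    apply (isOpen_compl_singleton (x := (0 : Euc n))).isOpenMap_subtype_val
    exact (hs.prod hIio).preimage (homeomorphUnitSphereProd (Euc n)).continuous
  have hTne : T.Nonempty := by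
    obtain ⟨u, hu⟩ := hne
    refine ⟨_, Set.mem_image_of_mem _
      (x := (homeomorphUnitSphereProd (Euc n)).symm (u, ⟨1/2, by norm_num⟩)) ?_⟩
    simp only [Set.mem_preimage, Homeomorph.apply_symm_apply]
    exact ⟨hu, by simp [Set.mem_Iio, Subtype.mk_lt_mk]; norm_num⟩
  exact (hTopen.measure_pos volume hTne).ne'


theorem jensen_aux {α : Type} [MeasurableSpace α] [MetricSpace α] [CompactSpace α]
    [BorelSpace α] [Nonempty α] (S : Measure α) [IsFiniteMeasure S] [S.IsOpenPosMeasure]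
    (p : ℝ) (hp1 : 1 ≤ p) (bK bL : α → ℝ) (cbK : Continuous bK) (cbL : Continuous bL)
    (bKpos : ∀ u, 0 < bK u) (bLpos : ∀ u, 0 < bL u)
    (φ : ℝ → ℝ) (hconv : ConvexOn ℝ (Set.Ioi (0 : ℝ)) φ)
    (hanti : AntitoneOn φ (Set.Ioi (0 : ℝ))) :
    (φ (((∫ u, bL u ^ p ∂S) / (∫ u, bK u ^ p ∂S)) ^ (1/p)) ≤
      (1 / ∫ u, bK u ^ p ∂S) * ∫ u, φ (bL u / bK u) * bK u ^ p ∂S) ∧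
    (StrictConvexOn ℝ (Set.Ioi (0 : ℝ)) φ →
      ((1 / ∫ u, bK u ^ p ∂S) * ∫ u, φ (bL u / bK u) * bK u ^ p ∂S =
        φ (((∫ u, bL u ^ p ∂S) / (∫ u, bK u ^ p ∂S)) ^ (1/p)) ↔
      ∃ lam : ℝ, 0 < lam ∧ ∀ u, bL u = lam * bK u)) := by
  have hp0 : 0 < p := lt_of_lt_of_le one_pos hp1
  have integ : ∀ g : α → ℝ, Continuous g → Integrable g S := fun g hg =>
    hg.integrable_of_hasCompactSupport (HasCompactSupport.of_compactSpace g)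
  have cwK : Continuous (fun u => bK u ^ p) := cbK.rpow_const (fun x => Or.inr hp0.le)
  have cwL : Continuous (fun u => bL u ^ p) := cbL.rpow_const (fun x => Or.inr hp0.le)
  have wKpos : ∀ u, 0 < bK u ^ p := fun u => Real.rpow_pos_of_pos (bKpos u) p
  have wLpos : ∀ u, 0 < bL u ^ p := fun u => Real.rpow_pos_of_pos (bLpos u) p
  set f : α → ℝ := fun u => bL u / bK u with hf
  set IK := ∫ u, bK u ^ p ∂S with hIK
  set IL := ∫ u, bL u ^ p ∂S with hIL
  have hIKpos : 0 < IK := by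
    rw [hIK, integral_pos_iff_support_of_nonneg (fun u => (wKpos u).le) (integ _ cwK),
      (Set.eq_univ_of_forall (fun u => (wKpos u).ne') :
        Function.support (fun u : α => bK u ^ p) = Set.univ)]
    exact isOpen_univ.measure_pos S Set.univ_nonempty
  have hILpos : 0 < IL := by
    rw [hIL, integral_pos_iff_support_of_nonneg (fun u => (wLpos u).le) (integ _ cwL),
      (Set.eq_univ_of_forall (fun u => (wLpos u).ne') :
        Function.support (fun u : α => bL u ^ p) = Set.univ)]
    exact isOpen_univ.measure_pos S Set.univ_nonempty
  set μ := (ENNReal.ofReal IK)⁻¹ • S.withDensity (fun u => ENNReal.ofReal (bK u ^ p)) with hμ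
  have hint : ∀ g : α → ℝ, Continuous g → ∫ u, g u ∂μ = IK⁻¹ * ∫ u, g u * bK u ^ p ∂S := by
    intro g hg
    rw [hμ, integral_smul_measure]
    rw [show (fun u => ENNReal.ofReal (bK u ^ p)) =
      (fun u => ((Real.toNNReal (bK u ^ p) : ℝ≥0) : ℝ≥0∞)) from rfl]
    rw [integral_withDensity_eq_integral_smul (cwK.measurable.real_toNNReal) g]
    rw [ENNReal.toReal_inv, ENNReal.toReal_ofReal hIKpos.le, smul_eq_mul]
    congr 1
    refine integral_congr_ae (Eventually.of_forall fun u => ?_)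
    show (bK u ^ p).toNNReal • g u = g u * bK u ^ p
    rw [NNReal.smul_def, Real.coe_toNNReal _ (wKpos u).le, smul_eq_mul]
    ring
  haveI hprob : IsProbabilityMeasure μ := by
    constructor
    rw [hμ, Measure.smul_apply, withDensity_apply _ MeasurableSet.univ, Measure.restrict_univ]
    rw [← ofReal_integral_eq_lintegral_ofReal (integ _ cwK)
      (Eventually.of_forall fun u => (wKpos u).le)]
    rw [smul_eq_mul, ← hIK, ENNReal.inv_mul_cancel (ENNReal.ofReal_pos.2 hIKpos).ne'
      ENNReal.ofReal_ne_top]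
  have integμ : ∀ g : α → ℝ, Continuous g → Integrable g μ := fun g hg =>
    hg.integrable_of_hasCompactSupport (HasCompactSupport.of_compactSpace g)
  have cf : Continuous f := cbL.div cbK (fun u => (bKpos u).ne')
  have fpos : ∀ u, 0 < f u := fun u => div_pos (bLpos u) (bKpos u)
  obtain ⟨u₁, -, hmin'⟩ := isCompact_univ.exists_isMinOn univ_nonempty cf.continuousOn
  obtain ⟨u₂, -, hmax'⟩ := isCompact_univ.exists_isMaxOn univ_nonempty cf.continuousOn
  have hmin : ∀ u : α, f u₁ ≤ f u := fun u => hmin' (mem_univ u)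
  have hmax : ∀ u : α, f u ≤ f u₂ := fun u => hmax' (mem_univ u)
  have hab : Set.Icc (f u₁) (f u₂) ⊆ Set.Ioi 0 :=
    fun x hx => lt_of_lt_of_le (fpos u₁) hx.1
  have hfs : ∀ᵐ u ∂μ, f u ∈ Set.Icc (f u₁) (f u₂) :=
    Eventually.of_forall fun u => ⟨hmin u, hmax u⟩
  have hφc : ContinuousOn φ (Set.Icc (f u₁) (f u₂)) :=
    (hconv.continuousOn isOpen_Ioi).mono hab
  have hφfc : Continuous (fun u => φ (f u)) :=
    (hconv.continuousOn isOpen_Ioi).comp_continuous cf fpos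
  have jensen1 : φ (∫ u, f u ∂μ) ≤ ∫ u, φ (f u) ∂μ :=
    (hconv.subset hab (convex_Icc _ _)).map_integral_le hφc isClosed_Icc hfs
      (integμ f cf) (integμ _ hφfc)
  have hM1a : f u₁ ≤ ∫ u, f u ∂μ := by
    calc f u₁ = ∫ _u, f u₁ ∂μ := by simp
    _ ≤ ∫ u, f u ∂μ :=
      integral_mono (integrable_const _) (integμ f cf) (fun u => hmin u)
  have hM1pos : 0 < ∫ u, f u ∂μ := lt_of_lt_of_le (fpos u₁) hM1a
  have cψ : Continuous (fun x : ℝ => x ^ p) := by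
    rw [continuous_iff_continuousAt]
    exact fun x => Real.continuousAt_rpow_const x p (Or.inr hp0.le)
  have jensen2 : (∫ u, f u ∂μ) ^ p ≤ ∫ u, f u ^ p ∂μ :=
    (convexOn_rpow hp1).map_integral_le cψ.continuousOn isClosed_Ici
      (Eventually.of_forall fun u => (fpos u).le) (integμ f cf)
      (integμ _ (cψ.comp cf))
  have hfp : ∀ u, f u ^ p * bK u ^ p = bL u ^ p := fun u => by
    rw [hf, ← Real.mul_rpow (div_nonneg (bLpos u).le (bKpos u).le) (bKpos u).le,
      div_mul_cancel₀ _ (bKpos u).ne']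
  have hIfp : ∫ u, f u ^ p ∂μ = IL / IK := by
    rw [hint (fun u => f u ^ p) (by exact cψ.comp cf)]
    simp only [hfp]
    rw [← hIL, inv_mul_eq_div]
  have hQpos : 0 < (IL/IK) ^ (1/p) := Real.rpow_pos_of_pos (div_pos hILpos hIKpos) _
  have hM1le : ∫ u, f u ∂μ ≤ (IL/IK) ^ (1/p) := by
    have h1 : ((∫ u, f u ∂μ) ^ p) ^ (1/p) ≤ (IL/IK) ^ (1/p) :=
      Real.rpow_le_rpow (by positivity) (hIfp ▸ jensen2) (by positivity)
    rwa [one_div, Real.rpow_rpow_inv hM1pos.le hp0.ne', ← one_div] at h1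
  have key_chain : φ ((IL/IK) ^ (1/p)) ≤ φ (∫ u, f u ∂μ) :=
    hanti (Set.mem_Ioi.2 hM1pos) (Set.mem_Ioi.2 hQpos) hM1le
  have hLHS : (1/IK) * ∫ u, φ (f u) * bK u ^ p ∂S = ∫ u, φ (f u) ∂μ := by
    rw [hint _ hφfc, one_div]
  constructor
  · rw [hLHS]
    exact key_chain.trans jensen1
  · intro hstrict
    constructor
    · intro heq
      rw [hLHS] at heq
      have heq1 : φ (∫ u, f u ∂μ) = ∫ u, φ (f u) ∂μ := by
        refine le_antisymm jensen1 ?_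
        rw [heq]
        exact key_chain
      rcases (hstrict.subset hab (convex_Icc _ _)).ae_eq_const_or_map_average_lt hφc
        isClosed_Icc hfs (integμ f cf) (integμ _ hφfc) with hconst | hlt
      · rw [average_eq_integral] at hconst
        set c := ∫ u, f u ∂μ with hc
        have h1 : ∀ᵐ u ∂(S.withDensity (fun u => ENNReal.ofReal (bK u ^ p))), f u = c := by
          have := ae_iff.1 hconst
          rw [hμ, Measure.smul_apply, smul_eq_mul, mul_eq_zero] at this
          exact ae_iff.2 (this.resolve_left (ENNReal.inv_ne_zero.2 ENNReal.ofReal_ne_top))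
        have h2 : ∀ᵐ u ∂S, f u = c := by
          have h3 := (ae_withDensity_iff (by
            exact cwK.measurable.ennreal_ofReal)).1 h1
          filter_upwards [h3] with u hu
          exact hu (ENNReal.ofReal_pos.2 (wKpos u)).ne'
        have h4 : f = fun _ => c := (cf.ae_eq_iff_eq S continuous_const).1 h2
        refine ⟨c, hM1pos, fun u => ?_⟩
        have h5 : f u = c := congrFun h4 u
        rw [hf] at h5
        rw [div_eq_iff (bKpos u).ne'] at h5
        exact h5
      · exfalso
        rw [average_eq_integral, average_eq_integral] at hlt
        exact absurd heq1 hlt.ne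
    · rintro ⟨lam, hlam, hw⟩
      have hfl : ∀ u, f u = lam := fun u => by
        show bL u / bK u = lam
        rw [hw u, mul_div_assoc, div_self (bKpos u).ne', mul_one]
      have hILval : IL = lam ^ p * IK := by
        rw [hIL, hIK, ← integral_const_mul]
        exact integral_congr_ae (Eventually.of_forall fun u => by
          show bL u ^ p = lam ^ p * bK u ^ p
          rw [hw u, Real.mul_rpow hlam.le (bKpos u).le])
      have hlhs : (1/IK) * ∫ u, φ (f u) * bK u ^ p ∂S = φ lam := by
        simp only [hfl]
        rw [integral_const_mul, ← hIK, one_div, mul_comm (φ lam) IK, inv_mul_cancel_left₀ hIKpos.ne']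
      rw [hlhs, hILval, mul_div_assoc, div_self hIKpos.ne', mul_one, one_div,
        Real.rpow_rpow_inv hlam.le hp0.ne']

/-- Jensen-type inequality for the width measure: for decreasing convex
`φ : (0,∞) → (0,∞)`,
`(1/(n A_i(K))) ∫ φ(b(L,u)/b(K,u)) b(K,u)^{n-i} dS(u) ≥ φ((A_i(L)/A_i(K))^{1/(n-i)})`,
with equality (for strictly convex `φ`) iff `K` and `L` have similar width. -/
theorem orlicz_width_jensen {n : ℕ} (hn : 2 ≤ n) (i : ℕ) (hi : i < n)
    (φ : ℝ → ℝ) (hconv : ConvexOn ℝ (Set.Ioi (0 : ℝ)) φ)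
    (hanti : AntitoneOn φ (Set.Ioi (0 : ℝ))) (hpos : ∀ t : ℝ, 0 < t → 0 < φ t)
    (K L : Set (Euc n)) (hK : IsConvexBody K) (hL : IsConvexBody L) :
    (1 / ((n : ℝ) * widthIntegral n i K)) *
        ∫ u : sphere (0 : Euc n) 1,
          φ (halfWidth L (u : Euc n) / halfWidth K (u : Euc n)) *
            halfWidth K (u : Euc n) ^ ((n : ℝ) - i) ∂(sphMeasure n) ≥
      φ ((widthIntegral n i L / widthIntegral n i K) ^ (1 / ((n : ℝ) - i))) ∧
    (StrictConvexOn ℝ (Set.Ioi (0 : ℝ)) φ →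
      ((1 / ((n : ℝ) * widthIntegral n i K)) *
          ∫ u : sphere (0 : Euc n) 1,
            φ (halfWidth L (u : Euc n) / halfWidth K (u : Euc n)) *
              halfWidth K (u : Euc n) ^ ((n : ℝ) - i) ∂(sphMeasure n) =
        φ ((widthIntegral n i L / widthIntegral n i K) ^ (1 / ((n : ℝ) - i))) ↔
      SimilarWidth K L)) := by
  haveI hops : (sphMeasure n).IsOpenPosMeasure := sphMeasure_openPos (by omega)
  haveI hfin : IsFiniteMeasure (sphMeasure n) := by unfold sphMeasure; infer_instance
  haveI : Nontrivial (Euc n) := Module.nontrivial_of_finrank_pos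
    (R := ℝ) (by rw [finrank_euclideanSpace_fin]; omega)
  haveI : Nonempty (sphere (0 : Euc n) 1) :=
    (NormedSpace.sphere_nonempty.mpr zero_le_one).to_subtype
  have hKne : K.Nonempty := ⟨0, interior_subset hK.2.2⟩
  have hLne : L.Nonempty := ⟨0, interior_subset hL.2.2⟩
  set p : ℝ := (n : ℝ) - i with hp
  have hp1 : 1 ≤ p := by
    have : (i : ℝ) + 1 ≤ n := by exact_mod_cast hi
    simp only [hp]; linarith
  have hn0 : (n : ℝ) ≠ 0 := by positivity
  have cbK : Continuous (fun u : sphere (0 : Euc n) 1 => halfWidth K (u : Euc n)) :=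
    (continuous_halfWidth hK.1 hKne).comp continuous_subtype_val
  have cbL : Continuous (fun u : sphere (0 : Euc n) 1 => halfWidth L (u : Euc n)) :=
    (continuous_halfWidth hL.1 hLne).comp continuous_subtype_val
  have bKpos : ∀ u : sphere (0 : Euc n) 1, 0 < halfWidth K (u : Euc n) := fun u =>
    halfWidth_pos hK (mem_sphere_zero_iff_norm.1 u.2)
  have bLpos : ∀ u : sphere (0 : Euc n) 1, 0 < halfWidth L (u : Euc n) := fun u =>
    halfWidth_pos hL (mem_sphere_zero_iff_norm.1 u.2)
  have e1 : (n : ℝ) * widthIntegral n i K =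
      ∫ u : sphere (0 : Euc n) 1, halfWidth K (u : Euc n) ^ p ∂(sphMeasure n) := by
    rw [widthIntegral, ← mul_assoc, mul_one_div, div_self hn0, one_mul]
  have e1' : widthIntegral n i L / widthIntegral n i K =
      (∫ u : sphere (0 : Euc n) 1, halfWidth L (u : Euc n) ^ p ∂(sphMeasure n)) /
        ∫ u : sphere (0 : Euc n) 1, halfWidth K (u : Euc n) ^ p ∂(sphMeasure n) := by
    rw [widthIntegral, widthIntegral, mul_div_mul_left _ _ (one_div_ne_zero hn0)]
  obtain ⟨h1, h2⟩ := jensen_aux (sphMeasure n) p hp1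
    (fun u => halfWidth K (u : Euc n)) (fun u => halfWidth L (u : Euc n))
    cbK cbL bKpos bLpos φ hconv hanti
  have hSim : (∃ lam : ℝ, 0 < lam ∧ ∀ u : sphere (0 : Euc n) 1,
      halfWidth L (u : Euc n) = lam * halfWidth K (u : Euc n)) ↔ SimilarWidth K L := by
    constructor
    · rintro ⟨lam, hl, hw⟩
      exact ⟨lam, hl, fun u hu => hw ⟨u, mem_sphere_zero_iff_norm.2 hu⟩⟩
    · rintro ⟨lam, hl, hw⟩
      exact ⟨lam, hl, fun u => hw u (mem_sphere_zero_iff_norm.1 u.2)⟩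
  constructor
  · rw [e1, e1']
    exact h1
  · intro hsc
    rw [e1, e1']
    exact (h2 hsc).trans hSim

end
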